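/- For a function h on ℝ⁴∖{0} homogeneous of degree d ≠ −2, the operator (deg+2)⁻¹ defined by (deg+2)⁻¹h = h/(d+2) satisfies (deg+2)∘(deg+2)⁻¹ h = h; moreover the operator identity 2(deg+2) = ∇(Z·) + Z⁺∇⁺(·) holds: for any C¹ quaternion-valued function f, ∇(Z·f) + Z⁺·∇⁺f = 2(deg f + 2f), where deg = ∑ᵢ zⁱ∂ᵢ, Z = z⁰e₀+…+z³e₃, Z⁺ its conjugate, and products are quaternionic. -/

import Mathlib

noncomputable section

/-- The real quaternions. -/
abbrev Hq := Quaternion ℝ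

/-- The quaternionic units `e₀ = 1, e₁, e₂, e₃`. -/
def qe : Fin 4 → Hq := ![1, ⟨0,1,0,0⟩, ⟨0,0,1,0⟩, ⟨0,0,0,1⟩]

/-- Partial derivative `∂/∂zⁱ` of a quaternion-valued function on ℝ⁴. -/
def pdq (i : Fin 4) (f : (Fin 4 → ℝ) → Hq) : (Fin 4 → ℝ) → Hq :=
  fun x => fderiv ℝ f x (Pi.single i 1)

/-- `∇ = e₀∂₀ − e₁∂₁ − e₂∂₂ − e₃∂₃`. -/
def DMinus (f : (Fin 4 → ℝ) → Hq) : (Fin 4 → ℝ) → Hq :=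
  fun x => pdq 0 f x - qe 1 * pdq 1 f x - qe 2 * pdq 2 f x - qe 3 * pdq 3 f x

/-- The four-dimensional Laplacian `□ = ∑ᵢ ∂ᵢ²`. -/
def lapq (f : (Fin 4 → ℝ) → Hq) : (Fin 4 → ℝ) → Hq :=
  fun x => ∑ i : Fin 4, pdq i (pdq i f) x

/-- The quaternion `Z = z⁰e₀ + z¹e₁ + z²e₂ + z³e₃` attached to a point of ℝ⁴;
its quaternionic conjugate `Z⁺` is `star (Zq x)`. -/
def Zq (x : Fin 4 → ℝ) : Hq := ∑ i : Fin 4, x i • qe i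

/-- `∇⁺ = e₀∂₀ + e₁∂₁ + e₂∂₂ + e₃∂₃`. -/
def DPlus (f : (Fin 4 → ℝ) → Hq) : (Fin 4 → ℝ) → Hq :=
  fun x => ∑ i : Fin 4, qe i * pdq i f x

/-- The Euler degree operator `deg = ∑ᵢ zⁱ∂ᵢ` on quaternion-valued functions. -/
def degq (f : (Fin 4 → ℝ) → Hq) : (Fin 4 → ℝ) → Hq :=
  fun x => ∑ i : Fin 4, x i • pdq i f x

/-! Euler's identity `deg h = d h` for `h` homogeneous of degree `d` (differentiate `t ↦ h (t x)`
at `t = 1`) makes `h / (d + 2)` a preimage of `h` under `deg + 2`.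

For the factorization, write `∇ = ∑ ēᵢ ∂ᵢ`. The product rule gives `∂ᵢ (Z f) = eᵢ f + Z ∂ᵢ f`, and
since `ēᵢ eᵢ = 1` and `ēᵢ Z + Z̄ eᵢ = 2 Re (Z̄ eᵢ) = 2 zⁱ`, the sum `∇(Z f) + Z⁺ ∇⁺ f` collapses
to `4 f + 2 ∑ zⁱ ∂ᵢ f`. -/

open scoped Quaternion

lemma fderiv_apply_self_of_homogeneous {E F : Type*} [NormedAddCommGroup E] [NormedSpace ℝ E]
    [NormedAddCommGroup F] [NormedSpace ℝ F] {h : E → F} {d : ℝ} {x : E}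
    (hdiff : DifferentiableAt ℝ h x) (hom : ∀ t : ℝ, 0 < t → h (t • x) = t ^ d • h x) :
    fderiv ℝ h x x = d • h x := by
  have along_ray : HasDerivAt (fun t : ℝ => h (t • x)) (fderiv ℝ h x x) 1 := by
    have hline : HasDerivAt (fun t : ℝ => t • x) x 1 := by
      simpa using (hasDerivAt_id (1 : ℝ)).smul_const x
    exact hdiff.hasFDerivAt.comp_hasDerivAt_of_eq 1 hline (one_smul ℝ x).symm
  have power : HasDerivAt (fun t : ℝ => t ^ d • h x) (d • h x) 1 := by
    simpa using (Real.hasDerivAt_rpow_const (p := d) (Or.inl one_ne_zero)).smul_const (h x)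
  refine along_ray.unique (power.congr_of_eventuallyEq ?_)
  filter_upwards [Ioi_mem_nhds one_pos] with t ht using hom t ht

lemma degq_eq_fderiv_apply_self (h : (Fin 4 → ℝ) → Hq) (x : Fin 4 → ℝ) :
    degq h x = fderiv ℝ h x x := by
  calc degq h x = fderiv ℝ h x (∑ i, x i • Pi.single i 1) := by
        simp only [degq, pdq, map_sum, map_smul]
    _ = fderiv ℝ h x x := by rw [← pi_eq_sum_univ']

lemma hasFDerivAt_Zq (x : Fin 4 → ℝ) :
    HasFDerivAt Zq (Fintype.linearCombination ℝ qe).toContinuousLinearMap x := by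
  convert (Fintype.linearCombination ℝ qe).toContinuousLinearMap.hasFDerivAt using 1
  funext y
  simp [Zq, Fintype.linearCombination_apply]

lemma pdq_Zq_mul {f : (Fin 4 → ℝ) → Hq} {x : Fin 4 → ℝ} (hf : DifferentiableAt ℝ f x)
    (i : Fin 4) : pdq i (fun y => Zq y * f y) x = qe i * f x + Zq x * pdq i f x := by
  rw [pdq, fderiv_fun_mul' (hasFDerivAt_Zq x).differentiableAt hf, (hasFDerivAt_Zq x).fderiv]
  simp [Fintype.linearCombination_apply_single, pdq, add_comm]

section Components

variable (i : Fin 4) (x : Fin 4 → ℝ)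

@[simp] lemma qe_zero : qe 0 = 1 := rfl

@[simp] lemma re_qe : (qe i).re = if i = 0 then 1 else 0 := by fin_cases i <;> rfl
@[simp] lemma imI_qe : (qe i).imI = if i = 1 then 1 else 0 := by fin_cases i <;> rfl
@[simp] lemma imJ_qe : (qe i).imJ = if i = 2 then 1 else 0 := by fin_cases i <;> rfl
@[simp] lemma imK_qe : (qe i).imK = if i = 3 then 1 else 0 := by fin_cases i <;> rfl

@[simp] lemma re_Zq : (Zq x).re = x 0 := by simp [Zq, Fin.sum_univ_four]
@[simp] lemma imI_Zq : (Zq x).imI = x 1 := by simp [Zq, Fin.sum_univ_four]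
@[simp] lemma imJ_Zq : (Zq x).imJ = x 2 := by simp [Zq, Fin.sum_univ_four]
@[simp] lemma imK_Zq : (Zq x).imK = x 3 := by simp [Zq, Fin.sum_univ_four]

end Components

lemma star_qe {i : Fin 4} (hi : i ≠ 0) : star (qe i) = -qe i := by
  fin_cases i <;> ext <;> simp_all

lemma star_qe_mul_qe (i : Fin 4) : star (qe i) * qe i = 1 := by
  fin_cases i <;> ext <;>
    simp [Quaternion.re_mul, Quaternion.imI_mul, Quaternion.imJ_mul, Quaternion.imK_mul]

lemma star_qe_mul_Zq_add_star_Zq_mul_qe (i : Fin 4) (x : Fin 4 → ℝ) :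
    star (qe i) * Zq x + star (Zq x) * qe i = (2 * x i : ℝ) := by
  fin_cases i <;> ext <;>
    simp [Quaternion.re_mul, Quaternion.imI_mul, Quaternion.imJ_mul, Quaternion.imK_mul] <;> ring

lemma DMinus_eq_sum (f : (Fin 4 → ℝ) → Hq) (x : Fin 4 → ℝ) :
    DMinus f x = ∑ i, star (qe i) * pdq i f x := by
  simp [DMinus, Fin.sum_univ_four, sub_eq_add_neg, star_qe]

theorem DMinus_Zq_mul_add_star_Zq_mul_DPlus {f : (Fin 4 → ℝ) → Hq} {x : Fin 4 → ℝ}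
    (hf : DifferentiableAt ℝ f x) :
    DMinus (fun y => Zq y * f y) x + star (Zq x) * DPlus f x
      = (2 : ℝ) • (degq f x + (2 : ℝ) • f x) := by
  have termwise (i : Fin 4) :
      star (qe i) * pdq i (fun y => Zq y * f y) x + star (Zq x) * (qe i * pdq i f x)
        = f x + (2 * x i) • pdq i f x := by
    rw [pdq_Zq_mul hf, mul_add, ← mul_assoc, ← mul_assoc, ← mul_assoc, star_qe_mul_qe, one_mul,
      add_assoc, ← add_mul, star_qe_mul_Zq_add_star_Zq_mul_qe, Quaternion.coe_mul_eq_smul]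
  rw [DMinus_eq_sum, DPlus, Finset.mul_sum, ← Finset.sum_add_distrib]
  simp only [termwise, Finset.sum_add_distrib, degq, Fin.sum_univ_four]
  module

/-- (a) for a C¹ function `h` on ℝ⁴∖{0}, homogeneous of degree
`d ≠ −2`, the operator `(deg+2)⁻¹ h = h/(d+2)` is a right inverse of `deg + 2`;
(b) the operator identity `2(deg+2) = ∇(Z·) + Z⁺∇⁺(·)`: for every C¹ quaternionic
function `f`, `∇(Zf) + Z⁺∇⁺f = 2(deg f + 2f)`. -/
theorem deg_plus_two_inverse_and_factorization :
    (∀ (d : ℝ), d ≠ -2 → ∀ h : (Fin 4 → ℝ) → Hq,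
      ContDiffOn ℝ 1 h {x | x ≠ 0} →
      (∀ t : ℝ, 0 < t → ∀ x : Fin 4 → ℝ, h (t • x) = (t ^ d) • h x) →
      ∀ x : Fin 4 → ℝ, x ≠ 0 →
        degq (fun y => (d + 2)⁻¹ • h y) x + (2 : ℝ) • ((d + 2)⁻¹ • h x) = h x) ∧
    (∀ f : (Fin 4 → ℝ) → Hq, ContDiff ℝ 1 f → ∀ x : Fin 4 → ℝ,
      DMinus (fun y => Zq y * f y) x + star (Zq x) * DPlus f x
        = (2 : ℝ) • (degq f x + (2 : ℝ) • f x)) := by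
  refine ⟨fun d hd h hh hom x hx => ?_,
    fun f hf x => DMinus_Zq_mul_add_star_Zq_mul_DPlus (hf.differentiable one_ne_zero x)⟩
  have hdiff : DifferentiableAt ℝ h x :=
    (hh.differentiableOn one_ne_zero x hx).differentiableAt (isOpen_ne.mem_nhds hx)
  have hd2 : d + 2 ≠ 0 := fun hc => hd (by linarith)
  have euler : fderiv ℝ (fun y => (d + 2)⁻¹ • h y) x x = d • (d + 2)⁻¹ • h x :=
    fderiv_apply_self_of_homogeneous (hdiff.fun_const_smul _) fun t ht => by
      rw [hom t ht x, smul_comm]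
  rw [degq_eq_fderiv_apply_self, euler, ← add_smul, smul_smul, mul_inv_cancel₀ hd2, one_smul]
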